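/- The strict dominators of any vertex v (in a rooted graph with all vertices reachable from the root) are linearly ordered by the dominance relation: for any two distinct strict dominators a and b of v, either a dominates b or b dominates a. -/

import Mathlib

variable {V : Type*}

/-- `p` is a path (finite walk) from `r` to `b` in the directed graph `adj`. -/
def IsPath (adj : V → V → Prop) (r b : V) (p : List V) : Prop :=
  p.head? = some r ∧ p.getLast? = some b ∧ p.Chain' adj

/-- `a` dominates `b` (w.r.t. root `r`): every path from `r` to `b` contains `a`. -/
def Dom (adj : V → V → Prop) (r a b : V) : Prop :=
  ∀ p : List V, IsPath adj r b p → a ∈ p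

/-- `a` strictly dominates `b`: `a` dominates `b` and `a ≠ b`. -/
def StrictDom (adj : V → V → Prop) (r a b : V) : Prop :=
  Dom adj r a b ∧ a ≠ b

/-- `v` is reachable from the root `r`. -/
def Reach (adj : V → V → Prop) (r v : V) : Prop :=
  ∃ p : List V, IsPath adj r v p

/-!
Fix a path `p` from `r` to `v` and let `b :: t` be its suffix from the last occurrence of `b`.
If `a` did not dominate `b`, a path to `b` avoiding `a` followed by `t` would be a path to `v`,
so `a` occurs in `t`. If moreover `b` did not dominate `a`, a path to `a` avoiding `b` followed
by the part of `t` after `a` would be a path to `v` avoiding `b`, since `b ∉ t`.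
-/

theorem List.exists_cons_suffix_notMem_of_mem {α : Type*} {x : α} {l : List α} (h : x ∈ l) :
    ∃ t, x :: t <:+ l ∧ x ∉ t := by
  classical
  obtain ⟨s, t, hxs, hl, -⟩ := List.exists_erase_eq (List.mem_reverse.2 h)
  refine ⟨s.reverse, ⟨t.reverse, ?_⟩, by simpa using hxs⟩
  simpa using congrArg List.reverse hl.symm

namespace IsPath

variable {adj : V → V → Prop}

theorem suffix {y v x : V} {p t : List V} (hp : IsPath adj y v p) (h : x :: t <:+ p) :
    IsPath adj x v (x :: t) := by
  obtain ⟨u, rfl⟩ := h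
  exact ⟨rfl, List.getLast?_append_cons u x t ▸ hp.2.1, hp.2.2.suffix ⟨u, rfl⟩⟩

theorem append {r x v : V} {q t : List V} (hq : IsPath adj r x q) (ht : IsPath adj x v (x :: t)) :
    IsPath adj r v (q ++ t) := by
  obtain ⟨hqr, hqx, hqc⟩ := hq
  obtain ⟨-, htv, htc⟩ := ht
  have hq : q ≠ [] := by rintro rfl; simp at hqr
  refine ⟨by rwa [List.head?_append_of_ne_nil _ hq], ?_, ?_⟩
  · cases t with
    | nil => simp_all
    | cons y t => rwa [List.getLast?_append_of_ne_nil _ (List.cons_ne_nil y t)]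
  · refine hqc.append htc.tail ?_
    simp only [hqx, Option.mem_some_iff, forall_eq']
    exact fun y hy => htc.rel_head? hy

end IsPath

theorem Dom.mem_of_not_dom_of_isPath {adj : V → V → Prop} {r a x v : V} {t : List V}
    (hav : Dom adj r a v) (hax : ¬Dom adj r a x) (ht : IsPath adj x v (x :: t)) : a ∈ t := by
  obtain ⟨q, hq, haq⟩ : ∃ q, IsPath adj r x q ∧ a ∉ q := by simpa [Dom] using hax
  simpa [haq] using hav _ (hq.append ht)

theorem strict_dominators_linearly_ordered_general (adj : V → V → Prop) (r v : V)
    (hreach : ∀ u : V, Reach adj r u) (a b : V)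
    (ha : StrictDom adj r a v) (hb : StrictDom adj r b v) :
    Dom adj r a b ∨ Dom adj r b a := by
  obtain ⟨p, hp⟩ := hreach v
  obtain ⟨t, hsuf, hbt⟩ := List.exists_cons_suffix_notMem_of_mem (hb.1 p hp)
  have hbv := hp.suffix hsuf
  by_contra! ⟨hab, hba⟩
  obtain ⟨s, t', rfl⟩ := List.append_of_mem (ha.1.mem_of_not_dom_of_isPath hab hbv)
  have hav : IsPath adj a v (a :: t') := hbv.suffix ⟨b :: s, rfl⟩
  exact hbt (List.mem_append_right s (.tail a (hb.1.mem_of_not_dom_of_isPath hba hav)))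

/-- The strict dominators of any vertex `v` (all vertices reachable from the root) are
linearly ordered by dominance: for distinct strict dominators `a` and `b` of `v`,
either `a` dominates `b` or `b` dominates `a`. -/
theorem strict_dominators_linearly_ordered (adj : V → V → Prop) (r v : V)
    (hreach : ∀ u : V, Reach adj r u) (a b : V)
    (ha : StrictDom adj r a v) (hb : StrictDom adj r b v) (hab : a ≠ b) :
    Dom adj r a b ∨ Dom adj r b a :=
  strict_dominators_linearly_ordered_general adj r v hreach a b ha hb
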